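/- arXiv:2005.00681 — 4 statements merged into one kernel-verified Lean document; each statement's English description precedes it below -/
import Mathlib

section
/- Let Nodes be any finite set of finite strings over an alphabet Σ and let u ∈ Nodes be nonempty. Then the number of in-coming Weiner links of u, i.e., the cardinality of the set of pairs (a, v) with a ∈ Σ, v ∈ Nodes, such that u is a minimum-length element of Nodes having a·v as a prefix, is at most |u|, the length of u. Consequently, it is at most the maximum length of an element of Nodes (the height/maximal string depth of the suffix tree). -/
/-- The set of in-coming Weiner links `(a, v)` of the node `u` with respect to the node
set `Nodes`: `v ∈ Nodes` and `u` is a minimum-length element of `Nodes` having `a·v`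
as a prefix. -/
def incomingWeinerLinks {α : Type*} (Nodes : Finset (List α)) (u : List α) :
    Set (α × List α) :=
  {p | p.2 ∈ Nodes ∧ (p.1 :: p.2) <+: u ∧
    ∀ u' ∈ Nodes, (p.1 :: p.2) <+: u' → u.length ≤ u'.length}

/-- The number of in-coming Weiner links of a nonempty node `u` is at most the length of
`u`, and hence at most the maximum length of an element of `Nodes` (the height of the
suffix tree). -/
theorem card_incomingWeinerLinks_le {α : Type*} (Nodes : Finset (List α))
    (u : List α) (hu : u ∈ Nodes) (hne : u ≠ []) :
    (incomingWeinerLinks Nodes u).ncard ≤ u.length ∧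
    (incomingWeinerLinks Nodes u).ncard ≤ Nodes.sup List.length := by
  have key : (incomingWeinerLinks Nodes u).ncard ≤ u.length := by
    have h1 : Set.InjOn (fun p : α × List α => p.2.length)
        (incomingWeinerLinks Nodes u) := by
      rintro ⟨a, v⟩ ⟨hv, hpre, _⟩ ⟨b, w⟩ ⟨hw, hpre', _⟩ hlen
      simp only at hlen
      have : (a :: v) = (b :: w) := by
        have := List.prefix_of_prefix_length_le hpre hpre' (by simp [hlen])
        exact this.eq_of_length (by simp [hlen])
      simp_all
    have h2 : Set.MapsTo (fun p : α × List α => p.2.length)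
        (incomingWeinerLinks Nodes u) (Set.Iio u.length) := by
      rintro ⟨a, v⟩ ⟨hv, hpre, _⟩
      have := hpre.length_le
      simp only [List.length_cons] at this
      simpa using Nat.lt_of_succ_le this
    calc (incomingWeinerLinks Nodes u).ncard
        ≤ (Set.Iio u.length).ncard :=
          Set.ncard_le_ncard_of_injOn _ h2 h1 (Set.finite_Iio _)
      _ = u.length := by simp [Set.ncard_eq_toFinset_card']
  exact ⟨key, key.trans (Finset.le_sup hu)⟩
end

section
/- Let 𝒮 = (S_1, …, S_K) be a finite collection of finite strings over an alphabet Σ and let w be a nonempty substring of 𝒮. Then the following are equivalent: (i) for every character a ∈ Σ, EndPos(a·w) ≠ EndPos(w); (ii) w is a prefix of some S_i, or w is left-branching in 𝒮 (i.e., there exist characters a ≠ b such that both a·w and b·w are substrings of 𝒮). (Condition (i) says exactly that w is the unique longest string of its endpos-equivalence class, i.e., w = long(v) for a node v of the DAWG of 𝒮; this equivalence underlies the correspondence between DAWG nodes of 𝒮 and suffix tree nodes of the reversed collection.) -/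
/-! Reading `EndPos S w` as the set of prefixes `(S i).take j` that have `w` as a suffix, an
occurrence of `w` ending at `j` extends to the left by exactly one character, unless `j = |w|`,
i.e. unless it is an occurrence of `w` as a prefix of `S i`. If `w` is never a prefix and all
left extensions of `w` use the same character `a`, every occurrence of `w` is therefore an
occurrence of `a·w`, and `EndPos (a·w) = EndPos w`. Conversely an occurrence of `w` as a prefix
is too short to be one of `a·w`, and if `EndPos (c·w) = EndPos w` then every occurrence of a left
extension `d·w` is one of `c·w`, forcing `d = c`. -/

/-- `EndPos S w` is the set of ending positions of the nonempty string `w` in the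
collection `S = (S 0, …, S (K-1))`: pairs `(i, j)` with `|w| ≤ j ≤ |S i|` (positions
being 1-based) such that `w` equals the length-`|w|` substring of `S i` ending at
position `j`. -/
def EndPos {α : Type*} {K : ℕ} (S : Fin K → List α) (w : List α) :
    Set (Fin K × ℕ) :=
  {p | w.length ≤ p.2 ∧ p.2 ≤ (S p.1).length ∧
    w = ((S p.1).take p.2).drop (p.2 - w.length)}

namespace List

variable {α : Type*} {w t : List α}

theorem exists_cons_suffix_of_suffix (h : w <:+ t) (hlt : w.length < t.length) :
    ∃ a, a :: w <:+ t := by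
  obtain ⟨s, rfl⟩ := h
  rcases s.eq_nil_or_concat with rfl | ⟨s', a, rfl⟩
  · simp at hlt
  · exact ⟨a, s', by simp⟩

theorem head_eq_of_cons_suffix_of_cons_suffix {a c : α} (ha : a :: w <:+ t)
    (hc : c :: w <:+ t) : a = c :=
  head_eq_of_cons_eq <|
    (suffix_of_suffix_length_le ha hc (by simp)).eq_of_length (by simp)

end List

section EndPos

variable {α : Type*} {K : ℕ} {S : Fin K → List α} {w : List α} {i : Fin K} {j : ℕ}

theorem mem_EndPos_iff : (i, j) ∈ EndPos S w ↔ j ≤ (S i).length ∧ w <:+ (S i).take j := by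
  constructor
  · rintro ⟨-, hj, hw⟩
    exact ⟨hj, List.suffix_iff_eq_drop.mpr (by simpa [hj] using hw)⟩
  · rintro ⟨hj, hw⟩
    refine ⟨by simpa [hj] using hw.length_le, hj, ?_⟩
    simpa [hj] using List.suffix_iff_eq_drop.mp hw

theorem EndPos_cons_subset (a : α) : EndPos S (a :: w) ⊆ EndPos S w := by
  rintro ⟨i, j⟩ h
  rw [mem_EndPos_iff] at h ⊢
  exact ⟨h.1, (List.suffix_cons a w).trans h.2⟩

theorem infix_of_mem_EndPos (h : (i, j) ∈ EndPos S w) : w <:+: S i :=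
  (mem_EndPos_iff.mp h).2.isInfix.trans (List.take_prefix _ _).isInfix

theorem exists_mem_EndPos_of_infix (h : w <:+: S i) : ∃ j, (i, j) ∈ EndPos S w := by
  obtain ⟨t, hwt, hts⟩ := List.infix_iff_suffix_prefix.mp h
  refine ⟨t.length, mem_EndPos_iff.mpr ⟨hts.length_le, ?_⟩⟩
  rwa [← List.prefix_iff_eq_take.mp hts]

theorem mem_EndPos_length_iff : (i, w.length) ∈ EndPos S w ↔ w <+: S i := by
  rw [mem_EndPos_iff]
  constructor
  · rintro ⟨hle, hw⟩
    rw [hw.eq_of_length (by simp [hle])]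
    exact List.take_prefix _ _
  · intro h
    exact ⟨h.length_le, List.prefix_iff_eq_take.mp h ▸ List.suffix_refl _⟩

theorem prefix_or_exists_cons_mem_EndPos (h : (i, j) ∈ EndPos S w) :
    w <+: S i ∨ ∃ a, (i, j) ∈ EndPos S (a :: w) := by
  rcases h.1.eq_or_lt with hj | hj
  · exact .inl (mem_EndPos_length_iff.mp (hj ▸ h))
  · obtain ⟨hle, hw⟩ := mem_EndPos_iff.mp h
    obtain ⟨a, ha⟩ := List.exists_cons_suffix_of_suffix hw (by simpa [hle] using hj)
    exact .inr ⟨a, mem_EndPos_iff.mpr ⟨hle, ha⟩⟩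

theorem head_eq_of_mem_EndPos_cons {a c : α} (ha : (i, j) ∈ EndPos S (a :: w))
    (hc : (i, j) ∈ EndPos S (c :: w)) : a = c :=
  List.head_eq_of_cons_suffix_of_cons_suffix (mem_EndPos_iff.mp ha).2 (mem_EndPos_iff.mp hc).2

theorem eq_of_EndPos_cons_eq {c d : α} (h : EndPos S (c :: w) = EndPos S w)
    (hd : d :: w <:+: S i) : d = c := by
  obtain ⟨j, hj⟩ := exists_mem_EndPos_of_infix hd
  exact head_eq_of_mem_EndPos_cons hj (h ▸ EndPos_cons_subset d hj)

theorem exists_EndPos_cons_eq (hsub : ∃ i, w <:+: S i) (hpre : ∀ i, ¬ w <+: S i)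
    (hunique : ∀ a b : α, (∃ i, a :: w <:+: S i) → (∃ i, b :: w <:+: S i) → a = b) :
    ∃ a, EndPos S (a :: w) = EndPos S w := by
  have extend {i j} (h : (i, j) ∈ EndPos S w) : ∃ a, (i, j) ∈ EndPos S (a :: w) :=
    (prefix_or_exists_cons_mem_EndPos h).resolve_left (hpre i)
  obtain ⟨i₀, hi₀⟩ := hsub
  obtain ⟨j₀, hj₀⟩ := exists_mem_EndPos_of_infix hi₀
  obtain ⟨a, ha⟩ := extend hj₀
  refine ⟨a, (EndPos_cons_subset a).antisymm ?_⟩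
  rintro ⟨i, j⟩ h
  obtain ⟨b, hb⟩ := extend h
  rwa [hunique a b ⟨i₀, infix_of_mem_EndPos ha⟩ ⟨i, infix_of_mem_EndPos hb⟩]

end EndPos

theorem longest_in_class_iff_prefix_or_leftBranching_general {α : Type*} (K : ℕ)
    (S : Fin K → List α) (w : List α) (hsub : ∃ i, w <:+: S i) :
    (∀ a : α, EndPos S (a :: w) ≠ EndPos S w) ↔
      ((∃ i, w <+: S i) ∨
        ∃ a b : α, a ≠ b ∧ (∃ i, (a :: w) <:+: S i) ∧ (∃ i, (b :: w) <:+: S i)) := by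
  constructor
  · intro hlongest
    by_contra! hnot
    obtain ⟨a, ha⟩ := exists_EndPos_cons_eq hsub hnot.1 fun a b ha ⟨ib, hb⟩ ↦
      by_contra fun hab ↦ hnot.2 a b hab ha ib hb
    exact hlongest a ha
  · rintro (⟨i, hpre⟩ | ⟨a, b, hab, ⟨ia, ha⟩, ⟨ib, hb⟩⟩) c hc
    · have hmem : (i, w.length) ∈ EndPos S (c :: w) := hc ▸ mem_EndPos_length_iff.mpr hpre
      simpa using hmem.1
    · exact hab ((eq_of_EndPos_cons_eq hc ha).trans (eq_of_EndPos_cons_eq hc hb).symm)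

/-- For a nonempty substring `w` of `S`, the following are equivalent:
(i) for every character `a`, `EndPos (a·w) ≠ EndPos w`
(i.e. `w` is the longest string of its endpos-equivalence class);
(ii) `w` is a prefix of some `S i`, or `w` is left-branching in `S`. -/
theorem longest_in_class_iff_prefix_or_leftBranching {α : Type*} (K : ℕ)
    (S : Fin K → List α) (w : List α) (hw : w ≠ []) (hsub : ∃ i, w <:+: S i) :
    (∀ a : α, EndPos S (a :: w) ≠ EndPos S w) ↔
      ((∃ i, w <+: S i) ∨
        ∃ a b : α, a ≠ b ∧ (∃ i, (a :: w) <:+: S i) ∧ (∃ i, (b :: w) <:+: S i)) :=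
  longest_in_class_iff_prefix_or_leftBranching_general K S w hsub
end

section
/- Let 𝒮 = (S_1, …, S_K) be a finite collection of nonempty finite strings over an alphabet Σ with total length N ≥ 3. Then the number of edges of the DAWG of 𝒮, i.e., the number of pairs (C, a) where C is an endpos-equivalence class of nonempty substrings of 𝒮 and a ∈ Σ is a character such that w·a is a substring of 𝒮 for some (equivalently, every) w ∈ C, is at most 3N − 4. (Equivalently, by the duality between DAWG edges and Weiner links, the total number of hard and soft Weiner links of the suffix tree of the reversed collection is at most 3N − 4.) -/
section Laminar
variable {β : Type*}

def IsLaminar (𝒜 : Set (Set β)) : Prop :=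
  ∀ A ∈ 𝒜, ∀ B ∈ 𝒜, A ⊆ B ∨ B ⊆ A ∨ Disjoint A B

theorem IsLaminar.mono {𝒜 ℬ : Set (Set β)} (h : IsLaminar 𝒜) (hℬ : ℬ ⊆ 𝒜) : IsLaminar ℬ :=
  fun A hA B hB => h A (hℬ hA) B (hℬ hB)

theorem IsLaminar.ncard_lt_two_mul {𝒜 : Set (Set β)} {X : Set β} (h𝒜 : IsLaminar 𝒜)
    (hX : X.Finite) (hXne : X.Nonempty) (hsub : ∀ A ∈ 𝒜, A ⊆ X)
    (hne : ∀ A ∈ 𝒜, A.Nonempty) : 𝒜.ncard < 2 * X.ncard := by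
  induction hn : X.ncard using Nat.strong_induction_on generalizing X 𝒜 with
  | _ n ih =>
  have h𝒜fin : 𝒜.Finite := hX.finite_subsets.subset hsub
  have hcard : 𝒜.ncard ≤ (𝒜 \ {X}).ncard + 1 := by
    simpa using Set.ncard_le_ncard_sdiff_add_ncard 𝒜 {X}
  obtain h𝒜' | h𝒜'ne := (𝒜 \ {X}).eq_empty_or_nonempty
  · have : 0 < n := hn ▸ (Set.ncard_pos hX).mpr hXne
    rw [h𝒜', Set.ncard_empty] at hcard
    omega
  -- Split off a maximal proper member `B`: the others lie inside `B` or inside `X \ B`.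
  obtain ⟨B, ⟨hB𝒜, hBX⟩, hBmax⟩ := h𝒜fin.sdiff.exists_maximal h𝒜'ne
  have hBX : B ⊂ X := (hsub B hB𝒜).ssubset_of_ne hBX
  set 𝒜in := {A ∈ 𝒜 \ {X} | A ⊆ B}
  set 𝒜out := {A ∈ 𝒜 \ {X} | A ⊆ X \ B}
  have hsplit : 𝒜 \ {X} ⊆ 𝒜in ∪ 𝒜out := by
    intro A hA
    rcases h𝒜 A hA.1 B hB𝒜 with hAB | hBA | hdisj
    · exact Or.inl ⟨hA, hAB⟩
    · exact Or.inl ⟨hA, hBmax hA hBA⟩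
    · exact Or.inr ⟨hA, Set.subset_sdiff.mpr ⟨hsub A hA.1, hdisj⟩⟩
  have hBpos : 0 < B.ncard := (Set.ncard_pos (hX.subset hBX.le)).mpr (hne B hB𝒜)
  have hXB := Set.ncard_sdiff_add_ncard_of_subset hBX.le hX
  have hin : 𝒜in.ncard < 2 * B.ncard :=
    ih _ (hn ▸ Set.ncard_lt_ncard hBX hX) (h𝒜.mono fun A hA => hA.1.1) (hX.subset hBX.le)
      (hne B hB𝒜) (fun A hA => hA.2) (fun A hA => hne A hA.1.1) rfl
  have hout : 𝒜out.ncard < 2 * (X \ B).ncard :=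
    ih _ (by omega) (h𝒜.mono fun A hA => hA.1.1) hX.sdiff
      (Set.sdiff_nonempty.mpr hBX.not_subset) (fun A hA => hA.2) (fun A hA => hne A hA.1.1) rfl
  have := (Set.ncard_le_ncard hsplit ((h𝒜fin.subset fun A hA => hA.1.1).union
    (h𝒜fin.subset fun A hA => hA.1.1))).trans (Set.ncard_union_le _ _)
  omega

end Laminar

section Positions
variable {ι : Type*} [Fintype ι] (f : ι → ℕ)

theorem finite_setOf_pos_le : {p : ι × ℕ | 1 ≤ p.2 ∧ p.2 ≤ f p.1}.Finite :=
  (Set.finite_univ.prod (Set.finite_le_nat (∑ i, f i))).subset fun p hp =>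
    ⟨trivial, hp.2.trans (Finset.single_le_sum (fun i _ => Nat.zero_le (f i))
      (Finset.mem_univ p.1))⟩

theorem ncard_setOf_pos_le : {p : ι × ℕ | 1 ≤ p.2 ∧ p.2 ≤ f p.1}.ncard = ∑ i, f i := by
  classical
  have : {p : ι × ℕ | 1 ≤ p.2 ∧ p.2 ≤ f p.1} = ↑((Finset.univ.sigma fun i =>
      Finset.Icc 1 (f i)).map (Equiv.sigmaEquivProd ι ℕ).toEmbedding) := by
    ext ⟨i, j⟩
    simp
  rw [this, Set.ncard_coe_finset, Finset.card_map, Finset.card_sigma]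
  simp

end Positions

theorem Finset.sum_tsub_const_le {ι : Type*} (s : Finset ι) (f : ι → ℕ) (c : ℕ) :
    ∑ i ∈ s, (f i - c) ≤ (∑ i ∈ s, f i) - c := by
  classical
  by_cases h : ∃ i ∈ s, c ≤ f i
  · obtain ⟨i, hi, hc⟩ := h
    rw [← Finset.add_sum_erase s _ hi, ← Finset.add_sum_erase s _ hi]
    have := Finset.sum_le_sum fun j (_ : j ∈ s.erase i) => Nat.sub_le (f j) c
    omega
  · push Not at h
    simp [Finset.sum_eq_zero fun i hi => Nat.sub_eq_zero_of_le (h i hi).le]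

theorem List.append_singleton_suffix_append_singleton {α : Type*} {l₁ l₂ : List α} {a b : α} :
    l₁ ++ [a] <:+ l₂ ++ [b] ↔ l₁ <:+ l₂ ∧ a = b := by
  simp [List.suffix_concat_iff, List.append_singleton_inj, and_comm]

theorem List.injective_append_singleton {α : Type*} :
    Function.Injective fun q : List α × α => q.1 ++ [q.2] :=
  fun _ _ h => Prod.ext_iff.mpr (List.append_singleton_inj.mp h)

section EndPos
variable {α : Type*} {K : ℕ} {S : Fin K → List α}

theorem mem_endPos_iff {i : Fin K} {j : ℕ} {w : List α} :
    (i, j) ∈ EndPos S w ↔ j ≤ (S i).length ∧ w <:+ (S i).take j := by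
  change _ ∧ _ ∧ _ ↔ _
  constructor
  · rintro ⟨-, hj, hw⟩
    exact ⟨hj, hw ▸ List.drop_suffix _ _⟩
  · rintro ⟨hj, hw⟩
    have hlen : ((S i).take j).length = j := by simp [hj]
    refine ⟨hlen ▸ hw.length_le, hj, ?_⟩
    conv_lhs => rw [List.suffix_iff_eq_drop.mp hw, hlen]

theorem endPos_nonempty_iff {w : List α} : (EndPos S w).Nonempty ↔ ∃ i, w <:+: S i := by
  constructor
  · rintro ⟨⟨i, j⟩, h⟩
    exact ⟨i, (mem_endPos_iff.mp h).2.isInfix.trans (List.take_prefix j (S i)).isInfix⟩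
  · rintro ⟨i, s, t, hst⟩
    refine ⟨(i, (s ++ w).length), mem_endPos_iff.mpr ⟨by simp [← hst], ?_⟩⟩
    rw [← hst, List.take_left]
    exact List.suffix_append s w

theorem finite_setOf_endPos_nonempty : {w : List α | (EndPos S w).Nonempty}.Finite := by
  refine (Set.finite_iUnion fun i => (S i).sublists.finite_toSet).subset fun w hw => ?_
  obtain ⟨i, hi⟩ := endPos_nonempty_iff.mp hw
  exact Set.mem_iUnion.mpr ⟨i, List.mem_sublists.mpr hi.sublist⟩

theorem endPos_subset_setOf_pos_le {w : List α} (hw : w ≠ []) :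
    EndPos S w ⊆ {p | 1 ≤ p.2 ∧ p.2 ≤ (S p.1).length} := fun _ ⟨hlen, hj, _⟩ =>
  ⟨(List.length_pos_iff.mpr hw).trans_le hlen, hj⟩

theorem endPos_anti {u w : List α} (h : u <:+ w) : EndPos S w ⊆ EndPos S u := by
  rintro ⟨i, j⟩ hw
  rw [mem_endPos_iff] at hw ⊢
  exact ⟨hw.1, h.trans hw.2⟩

theorem suffix_of_mem_endPos {u w : List α} {p : Fin K × ℕ} (hu : p ∈ EndPos S u)
    (hw : p ∈ EndPos S w) (hlen : u.length ≤ w.length) : u <:+ w :=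
  List.suffix_of_suffix_length_le (mem_endPos_iff.mp hu).2 (mem_endPos_iff.mp hw).2 hlen

theorem isLaminar_range_endPos : IsLaminar (Set.range (EndPos S)) := by
  rintro _ ⟨u, rfl⟩ _ ⟨w, rfl⟩
  by_cases hdisj : Disjoint (EndPos S u) (EndPos S w)
  · exact Or.inr (Or.inr hdisj)
  obtain ⟨p, hu, hw⟩ := Set.not_disjoint_iff.mp hdisj
  rcases le_total u.length w.length with hlen | hlen
  · exact Or.inr (Or.inl (endPos_anti (suffix_of_mem_endPos hu hw hlen)))
  · exact Or.inl (endPos_anti (suffix_of_mem_endPos hw hu hlen))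

theorem prefix_drop_of_mem_endPos {i : Fin K} {j : ℕ} {w : List α}
    (h : (i, j) ∈ EndPos S w) : w <+: (S i).drop (j - w.length) := by
  obtain ⟨-, -, hw⟩ := h
  conv_lhs => rw [hw, List.drop_take]
  exact List.take_prefix _ _

theorem mem_endPos_append_singleton {i : Fin K} {j : ℕ} {w : List α} {a : α} :
    (i, j + 1) ∈ EndPos S (w ++ [a]) ↔ (i, j) ∈ EndPos S w ∧ (S i)[j]? = some a := by
  simp only [mem_endPos_iff]
  rcases lt_or_ge j (S i).length with hj | hj
  · rw [← List.take_concat_get hj, List.concat_eq_append,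
      List.append_singleton_suffix_append_singleton, List.getElem?_eq_getElem hj, Option.some_inj]
    exact ⟨fun ⟨_, hw, ha⟩ => ⟨⟨hj.le, hw⟩, ha.symm⟩, fun ⟨⟨_, hw⟩, ha⟩ => ⟨hj, hw, ha.symm⟩⟩
  · simp only [List.getElem?_eq_none hj, reduceCtorEq, and_false, iff_false, not_and]
    omega

theorem endPos_append_singleton_congr {u w : List α} (h : EndPos S u = EndPos S w) (a : α) :
    EndPos S (u ++ [a]) = EndPos S (w ++ [a]) := by
  ext ⟨i, j⟩
  cases j with
  | zero => constructor <;> exact fun hp => absurd hp.1 (by simp)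
  | succ j => rw [mem_endPos_append_singleton, mem_endPos_append_singleton, h]

theorem endPos_append_congr {u w : List α} (h : EndPos S u = EndPos S w) (y : List α) :
    EndPos S (u ++ y) = EndPos S (w ++ y) := by
  induction y generalizing u w with
  | nil => simpa using h
  | cons a y ih => simpa using ih (endPos_append_singleton_congr h a)

end EndPos

section LeftMaximal
variable {α : Type*} {K : ℕ} {S : Fin K → List α}

variable (S) in
/-- `u` is the longest member of its endpos class. -/
def IsLeftMaximal (u : List α) : Prop :=
  u ≠ [] ∧ (EndPos S u).Nonempty ∧ ∀ c, EndPos S (c :: u) ≠ EndPos S u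

theorem IsLeftMaximal.of_append {x y : List α} (h : IsLeftMaximal S (x ++ y)) (hx : x ≠ []) :
    IsLeftMaximal S x := by
  obtain ⟨-, hne, hmax⟩ := h
  refine ⟨hx, ?_, fun c hc => hmax c (by simpa using endPos_append_congr hc y)⟩
  obtain ⟨i, hi⟩ := endPos_nonempty_iff.mp hne
  exact endPos_nonempty_iff.mpr ⟨i, (List.prefix_append x y).isInfix.trans hi⟩

theorem exists_isLeftMaximal_endPos_eq {w : List α} (hw : w ≠ [])
    (hne : (EndPos S w).Nonempty) : ∃ u, IsLeftMaximal S u ∧ EndPos S u = EndPos S w := by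
  set s := {u : List α | u ≠ [] ∧ EndPos S u = EndPos S w}
  have hs : s.Finite := finite_setOf_endPos_nonempty.subset fun u hu => hu.2 ▸ hne
  obtain ⟨u, ⟨hu, hEu⟩, hmax⟩ := hs.exists_maximalFor List.length s ⟨w, hw, rfl⟩
  refine ⟨u, ⟨hu, hEu ▸ hne, fun c hc => ?_⟩, hEu⟩
  have := hmax ⟨List.cons_ne_nil c u, hc.trans hEu⟩ (by simp)
  simp at this

theorem IsLeftMaximal.eq_of_endPos_eq {u w : List α} (hu : IsLeftMaximal S u)
    (h : EndPos S u = EndPos S w) (hlen : u.length ≤ w.length) : u = w := by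
  obtain ⟨p, hp⟩ := hu.2.1
  obtain ⟨z, rfl⟩ := suffix_of_mem_endPos hp (h ▸ hp) hlen
  rcases List.eq_nil_or_concat z with rfl | ⟨z, c, rfl⟩
  · rfl
  · refine absurd (Set.Subset.antisymm (endPos_anti (List.suffix_cons c u)) ?_) (hu.2.2 c)
    exact h ▸ endPos_anti ⟨z, by simp⟩

theorem injOn_endPos_setOf_isLeftMaximal : Set.InjOn (EndPos S) {u | IsLeftMaximal S u} := by
  intro u hu w hw h
  rcases le_total u.length w.length with hlen | hlen
  · exact hu.eq_of_endPos_eq h hlen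
  · exact (hw.eq_of_endPos_eq h.symm hlen).symm

theorem exists_isLeftMaximal_singleton (hS : ∃ i, S i ≠ []) : ∃ c, IsLeftMaximal S [c] := by
  obtain ⟨i, hi⟩ := hS
  obtain ⟨c, t, hct⟩ := List.exists_cons_of_ne_nil hi
  have hmem : (i, 1) ∈ EndPos S [c] := mem_endPos_iff.mpr ⟨by simp [hct], by simp [hct]⟩
  refine ⟨c, List.cons_ne_nil c [], ⟨_, hmem⟩, fun b hb => ?_⟩
  have := (hb ▸ hmem).1
  simp at this

theorem ncard_setOf_isLeftMaximal_lt (hS : ∃ i, S i ≠ []) :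
    {u | IsLeftMaximal S u}.ncard < 2 * ∑ i, (S i).length := by
  rw [← injOn_endPos_setOf_isLeftMaximal.ncard_image, ← ncard_setOf_pos_le]
  obtain ⟨c, hc⟩ := exists_isLeftMaximal_singleton hS
  refine (isLaminar_range_endPos.mono (Set.image_subset_range _ _)).ncard_lt_two_mul
    (finite_setOf_pos_le fun i => (S i).length) ?_ ?_ ?_
  · exact hc.2.1.mono (endPos_subset_setOf_pos_le hc.1)
  · rintro _ ⟨u, hu, rfl⟩
    exact endPos_subset_setOf_pos_le hu.1
  · rintro _ ⟨u, hu, rfl⟩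
    exact hu.2.1

end LeftMaximal

section Edges
variable {α : Type*} {K : ℕ} {S : Fin K → List α}

variable (S) in
/-- DAWG edges, each represented by the longest member of its source class and its label. -/
def dawgEdges : Set (List α × α) :=
  {q | IsLeftMaximal S q.1 ∧ (EndPos S (q.1 ++ [q.2])).Nonempty}

theorem finite_dawgEdges : (dawgEdges S).Finite :=
  (finite_setOf_endPos_nonempty.preimage List.injective_append_singleton.injOn).subset
    fun _ hq => hq.2

theorem setOf_dawg_edge_subset_image_dawgEdges :
    {q : Set (Fin K × ℕ) × α | ∃ w : List α, w ≠ [] ∧ (∃ i, w <:+: S i) ∧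
        q.1 = EndPos S w ∧ ∃ i, (w ++ [q.2]) <:+: S i} ⊆
      (fun q => (EndPos S q.1, q.2)) '' dawgEdges S := by
  rintro ⟨C, a⟩ ⟨w, hw, hsub, rfl, hwa⟩
  obtain ⟨u, hu, huw⟩ := exists_isLeftMaximal_endPos_eq hw (endPos_nonempty_iff.mpr hsub)
  refine ⟨(u, a), ⟨hu, ?_⟩, by simp [huw]⟩
  rw [endPos_append_singleton_congr huw]
  exact endPos_nonempty_iff.mpr hwa

theorem ncard_primary_lt (hS : ∃ i, S i ≠ []) :
    {q ∈ dawgEdges S | IsLeftMaximal S (q.1 ++ [q.2])}.ncard <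
      {u | IsLeftMaximal S u}.ncard := by
  obtain ⟨c, hc⟩ := exists_isLeftMaximal_singleton hS
  have hfin : {u | IsLeftMaximal S u}.Finite :=
    finite_setOf_endPos_nonempty.subset fun _ hu => hu.2.1
  calc _ ≤ ({u | IsLeftMaximal S u} \ {[c]}).ncard := by
        refine Set.ncard_le_ncard_of_injOn _ ?_ List.injective_append_singleton.injOn hfin.sdiff
        rintro ⟨u, a⟩ ⟨⟨hu, -⟩, hua⟩
        refine ⟨hua, fun h => hu.1 ?_⟩
        simpa using congrArg List.length (h : u ++ [a] = [c])
    _ < _ := Set.ncard_sdiff_singleton_lt_of_mem hc hfin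

theorem exists_start_of_not_isLeftMaximal {v : List α} (hv : v ≠ [])
    (hne : (EndPos S v).Nonempty) (hnot : ¬ IsLeftMaximal S v) :
    ∃ p : Fin K × ℕ, (1 ≤ p.2 ∧ p.2 + v.length ≤ (S p.1).length) ∧ v <+: (S p.1).drop p.2 := by
  obtain ⟨c, hc⟩ : ∃ c, EndPos S (c :: v) = EndPos S v := by
    simpa [IsLeftMaximal, hv, hne] using hnot
  obtain ⟨⟨i, j⟩, hp⟩ := hne
  have hcv : v.length + 1 ≤ j := (hc ▸ hp : (i, j) ∈ EndPos S (c :: v)).1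
  have hj : j ≤ (S i).length := hp.2.1
  exact ⟨(i, j - v.length), ⟨by omega, show j - v.length + v.length ≤ (S i).length by omega⟩,
    prefix_drop_of_mem_endPos hp⟩

theorem IsLeftMaximal.eq_of_prefix_append_singleton {u v : List α} {a : α}
    (hu : IsLeftMaximal S u) (hv : v ≠ []) (hnot : ¬ IsLeftMaximal S v) (h : v <+: u ++ [a]) :
    v = u ++ [a] :=
  (List.prefix_concat_iff.mp h).resolve_right fun ⟨_, htu⟩ => hnot ((htu ▸ hu).of_append hv)

theorem ncard_secondary_le :
    {q ∈ dawgEdges S | ¬ IsLeftMaximal S (q.1 ++ [q.2])}.ncard ≤ ∑ i, ((S i).length - 2) := by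
  have hstart : ∀ q ∈ {q ∈ dawgEdges S | ¬ IsLeftMaximal S (q.1 ++ [q.2])},
      ∃ p : Fin K × ℕ, (1 ≤ p.2 ∧ p.2 ≤ (S p.1).length - 2) ∧
        q.1 ++ [q.2] <+: (S p.1).drop p.2 := by
    rintro ⟨u, a⟩ ⟨⟨hu, hne⟩, hnot⟩
    obtain ⟨p, ⟨h₁, h₂⟩, hpre⟩ := exists_start_of_not_isLeftMaximal (by simp) hne hnot
    have hu₁ : 1 ≤ u.length := List.length_pos_iff.mpr hu.1
    have h₂ : p.2 + (u.length + 1) ≤ (S p.1).length := by simpa using h₂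
    exact ⟨p, ⟨h₁, by omega⟩, hpre⟩
  obtain hempty | ⟨q₀, hq₀⟩ := Set.eq_empty_or_nonempty
    {q ∈ dawgEdges S | ¬ IsLeftMaximal S (q.1 ++ [q.2])}
  · simp [hempty]
  have : Nonempty (Fin K × ℕ) := ⟨(hstart q₀ hq₀).choose⟩
  choose! start hstart using hstart
  rw [← ncard_setOf_pos_le]
  refine Set.ncard_le_ncard_of_injOn start (fun q hq => (hstart q hq).1) ?_
    (finite_setOf_pos_le fun i => (S i).length - 2)
  rintro ⟨u₁, a₁⟩ hq₁ ⟨u₂, a₂⟩ hq₂ h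
  have h₁ := (hstart _ hq₁).2
  have h₂ := (hstart _ hq₂).2
  rw [h] at h₁
  apply List.injective_append_singleton
  rcases List.prefix_or_prefix_of_prefix h₁ h₂ with h₁₂ | h₂₁
  · exact hq₂.1.1.eq_of_prefix_append_singleton (by simp) hq₁.2 h₁₂
  · exact (hq₁.1.1.eq_of_prefix_append_singleton (by simp) hq₂.2 h₂₁).symm

end Edges

theorem card_dawg_edges_le_general {α : Type*} (K : ℕ) (S : Fin K → List α)
    (N : ℕ) (hN : N = ∑ i, (S i).length) (hN3 : 3 ≤ N) :
    {q : Set (Fin K × ℕ) × α |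
        ∃ w : List α, w ≠ [] ∧ (∃ i, w <:+: S i) ∧ q.1 = EndPos S w ∧
          ∃ i, (w ++ [q.2]) <:+: S i}.ncard
      ≤ 3 * N - 4 := by
  have hS : ∃ i, S i ≠ [] := by
    by_contra! h
    simp only [h, List.length_nil, Finset.sum_const_zero] at hN
    omega
  have hsplit : (dawgEdges S).ncard =
      {q ∈ dawgEdges S | IsLeftMaximal S (q.1 ++ [q.2])}.ncard +
        {q ∈ dawgEdges S | ¬ IsLeftMaximal S (q.1 ++ [q.2])}.ncard :=
    (Set.ncard_inter_add_ncard_sdiff_eq_ncard _ _ finite_dawgEdges).symm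
  have hprimary := ncard_primary_lt hS
  have hclasses := ncard_setOf_isLeftMaximal_lt hS
  have hsecondary := (ncard_secondary_le (S := S)).trans (Finset.sum_tsub_const_le _ _ 2)
  calc _ ≤ ((fun q => (EndPos S q.1, q.2)) '' dawgEdges S).ncard :=
        Set.ncard_le_ncard setOf_dawg_edge_subset_image_dawgEdges (finite_dawgEdges.image _)
    _ ≤ (dawgEdges S).ncard := Set.ncard_image_le finite_dawgEdges
    _ ≤ 3 * N - 4 := by omega

/-- The DAWG of a collection of nonempty strings of total length `N ≥ 3` has at most
`3N - 4` edges: the number of pairs `(C, a)`, where `C = EndPos w` is an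
endpos-equivalence class of a nonempty substring `w` and `a` is a character such that
`w·a` is again a substring of the collection, is at most `3N - 4`. -/
theorem card_dawg_edges_le {α : Type*} (K : ℕ) (S : Fin K → List α)
    (hS : ∀ i, S i ≠ []) (N : ℕ) (hN : N = ∑ i, (S i).length) (hN3 : 3 ≤ N) :
    {q : Set (Fin K × ℕ) × α |
        ∃ w : List α, w ≠ [] ∧ (∃ i, w <:+: S i) ∧ q.1 = EndPos S w ∧
          ∃ i, (w ++ [q.2]) <:+: S i}.ncard
      ≤ 3 * N - 4 :=
  card_dawg_edges_le_general K S N hN hN3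
end

section
/- For every positive integer r there exist an integer k ≥ 1 and a non-increasing sequence of integers h_1 ≥ h_2 ≥ ⋯ ≥ h_k ≥ 1 such that r = Σ_{i=1}^{k} (2^{h_i} − 1), each value appears at most twice among h_1, …, h_k, and k ≤ 2·⌊log₂(r + 1)⌋. (This decomposition of r into sizes of complete binary trees, with heights non-increasing, is what allows building an AVL tree over r sorted elements in O(r) time by merging the complete binary trees in order of decreasing height.) -/
/-!
Take greedily a largest complete tree: with `m = ⌊log₂ (r + 1)⌋` one has
`2 ^ m - 1 ≤ r < 2 ^ (m + 1) - 1`, so the remainder is at most `2 ^ m - 1`. Either it is exactly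
`2 ^ m - 1`, and the decomposition ends with a second tree of height `m`, or all further heights
are `< m`. So every height occurs at most twice, and each drop of the height costs at most two
trees, which gives `k ≤ 2m`.
-/

theorem List.ncard_setOf_get_eq {α : Type*} [DecidableEq α] (l : List α) (a : α) :
    {i | l.get i = a}.ncard = l.count a := by
  rw [Set.ncard_eq_toFinset_card', Set.toFinset_ofPred]
  exact Fin.card_filter_univ_eq_vector_get_eq_count a ⟨l, rfl⟩

namespace CompleteTree

/-- What is left of `r` nodes after removing a largest complete binary tree that fits. -/
def remainder (r : ℕ) : ℕ := r - (2 ^ Nat.log 2 (r + 1) - 1)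

theorem two_pow_log_sub_one_le (r : ℕ) : 2 ^ Nat.log 2 (r + 1) - 1 ≤ r := by
  have := Nat.pow_log_le_self 2 (Nat.add_one_ne_zero r)
  omega

theorem remainder_le (r : ℕ) : remainder r ≤ 2 ^ Nat.log 2 (r + 1) - 1 := by
  have := Nat.lt_pow_succ_log_self (b := 2) one_lt_two (r + 1)
  rw [pow_succ] at this
  unfold remainder
  omega

theorem remainder_lt {r : ℕ} (hr : r ≠ 0) : remainder r < r := by
  have : 1 ≤ Nat.log 2 (r + 1) := Nat.log_pos one_lt_two (by omega)
  have : 2 ≤ 2 ^ Nat.log 2 (r + 1) := Nat.le_self_pow (by omega) 2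
  unfold remainder
  omega

theorem log_remainder_le (r : ℕ) : Nat.log 2 (remainder r + 1) ≤ Nat.log 2 (r + 1) :=
  Nat.log_mono_right (by unfold remainder; omega)

theorem remainder_eq_or_log_lt (r : ℕ) :
    remainder r = 2 ^ Nat.log 2 (r + 1) - 1 ∨
      Nat.log 2 (remainder r + 1) < Nat.log 2 (r + 1) := by
  refine (remainder_le r).eq_or_lt.imp id fun h => Nat.log_lt_of_lt_pow (by omega) ?_
  have := Nat.one_le_two_pow (n := Nat.log 2 (r + 1))
  omega

def greedyHeights (r : ℕ) : List ℕ :=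
  if hr : r = 0 then [] else Nat.log 2 (r + 1) :: greedyHeights (remainder r)
termination_by r
decreasing_by exact remainder_lt hr

@[simp]
theorem greedyHeights_zero : greedyHeights 0 = [] := by
  rw [greedyHeights, dif_pos rfl]

theorem greedyHeights_of_ne_zero {r : ℕ} (hr : r ≠ 0) :
    greedyHeights r = Nat.log 2 (r + 1) :: greedyHeights (remainder r) := by
  rw [greedyHeights, dif_neg hr]

theorem greedyHeights_two_pow_sub_one {m : ℕ} (hm : m ≠ 0) :
    greedyHeights (2 ^ m - 1) = [m] := by
  have hpos : 2 ^ m - 1 ≠ 0 := by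
    have := Nat.one_lt_two_pow hm
    omega
  have hlog : Nat.log 2 (2 ^ m - 1 + 1) = m := by
    rw [Nat.sub_add_cancel Nat.one_le_two_pow, Nat.log_pow one_lt_two]
  rw [greedyHeights_of_ne_zero hpos, hlog, remainder, hlog, Nat.sub_self, greedyHeights_zero]

theorem sum_map_greedyHeights (r : ℕ) : ((greedyHeights r).map (2 ^ · - 1)).sum = r := by
  induction r using Nat.strong_induction_on with
  | _ r ih =>
    rcases eq_or_ne r 0 with rfl | hr
    · simp
    rw [greedyHeights_of_ne_zero hr, List.map_cons, List.sum_cons, ih _ (remainder_lt hr)]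
    have := two_pow_log_sub_one_le r
    unfold remainder
    omega

theorem mem_greedyHeights {r x : ℕ} (hx : x ∈ greedyHeights r) :
    1 ≤ x ∧ x ≤ Nat.log 2 (r + 1) := by
  induction r using Nat.strong_induction_on generalizing x with
  | _ r ih =>
    rcases eq_or_ne r 0 with rfl | hr
    · simp at hx
    rw [greedyHeights_of_ne_zero hr, List.mem_cons] at hx
    rcases hx with rfl | hx
    · exact ⟨Nat.log_pos one_lt_two (by omega), le_rfl⟩
    · obtain ⟨hx₁, hx₂⟩ := ih _ (remainder_lt hr) hx
      exact ⟨hx₁, hx₂.trans (log_remainder_le r)⟩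

theorem sortedGE_greedyHeights (r : ℕ) : (greedyHeights r).SortedGE := by
  induction r using Nat.strong_induction_on with
  | _ r ih =>
    rcases eq_or_ne r 0 with rfl | hr
    · simp [List.sortedGE_iff_pairwise]
    rw [greedyHeights_of_ne_zero hr, List.sortedGE_iff_pairwise, List.pairwise_cons,
      ← List.sortedGE_iff_pairwise]
    exact ⟨fun x hx => (mem_greedyHeights hx).2.trans (log_remainder_le r), ih _ (remainder_lt hr)⟩

theorem count_greedyHeights_le_two (r v : ℕ) : (greedyHeights r).count v ≤ 2 := by
  induction r using Nat.strong_induction_on with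
  | _ r ih =>
    rcases eq_or_ne r 0 with rfl | hr
    · simp
    have hm : Nat.log 2 (r + 1) ≠ 0 := (Nat.log_pos one_lt_two (by omega)).ne'
    rw [greedyHeights_of_ne_zero hr]
    rcases remainder_eq_or_log_lt r with h | h
    · rw [h, greedyHeights_two_pow_sub_one hm]
      exact List.count_le_length
    · rw [List.count_cons]
      by_cases hv : Nat.log 2 (r + 1) = v
      · subst hv
        have : (greedyHeights (remainder r)).count (Nat.log 2 (r + 1)) = 0 :=
          List.count_eq_zero.2 fun hx => (mem_greedyHeights hx).2.not_gt h
        simp [this]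
      · simpa [hv] using ih _ (remainder_lt hr)

theorem length_greedyHeights_le (r : ℕ) : (greedyHeights r).length ≤ 2 * Nat.log 2 (r + 1) := by
  induction r using Nat.strong_induction_on with
  | _ r ih =>
    rcases eq_or_ne r 0 with rfl | hr
    · simp
    have hm : Nat.log 2 (r + 1) ≠ 0 := (Nat.log_pos one_lt_two (by omega)).ne'
    rw [greedyHeights_of_ne_zero hr, List.length_cons]
    rcases remainder_eq_or_log_lt r with h | h
    · rw [h, greedyHeights_two_pow_sub_one hm]
      simp only [List.length_singleton]
      omega
    · have := ih _ (remainder_lt hr)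
      omega

end CompleteTree

open CompleteTree in
/-- Every positive integer `r` can be decomposed as a sum `r = Σ_{i=1}^{k} (2^{h i} - 1)`
of sizes of complete binary trees with non-increasing positive heights `h 1 ≥ ⋯ ≥ h k`,
where each height value appears at most twice and `k ≤ 2 ⌊log₂ (r + 1)⌋`. -/
theorem complete_binary_tree_decomposition (r : ℕ) (hr : 1 ≤ r) :
    ∃ (k : ℕ) (h : Fin k → ℕ),
      1 ≤ k ∧
      (∀ i, 1 ≤ h i) ∧
      (∀ i j : Fin k, i ≤ j → h j ≤ h i) ∧
      r = ∑ i, (2 ^ (h i) - 1) ∧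
      (∀ v : ℕ, ({i : Fin k | h i = v} : Set (Fin k)).ncard ≤ 2) ∧
      k ≤ 2 * Nat.log 2 (r + 1) := by
  set L := greedyHeights r
  have hsum : (L.map (2 ^ · - 1)).sum = r := sum_map_greedyHeights r
  have hL : L ≠ [] := by
    rintro hL
    simp [hL] at hsum
    omega
  refine ⟨L.length, L.get, List.length_pos_iff.2 hL, fun i => (mem_greedyHeights (L.get_mem i)).1,
    fun _ _ hij => (sortedGE_greedyHeights r).antitone_get hij, ?_, fun v => ?_,
    length_greedyHeights_le r⟩
  · rw [← hsum, ← Fin.sum_univ_fun_getElem]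
    rfl
  · rw [List.ncard_setOf_get_eq]
    exact count_greedyHeights_le_two r v
end
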